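/- (Proposition 2 of the paper.) Consider a sequence indexed by t ∈ ℕ of without-replacement sampling designs on finite populations U_t of size N_t with N_t → ∞, with inclusion probabilities π_{k,t}, average sample sizes n_t = Σ_{k∈U_t} π_{k,t}, and nonnegative variables y_t : U_t → [0,∞) with totals t_{y,t}. Assume: (H1) n_t/N_t → f for some f ∈ (0,1); (H2) there exists λ₁ > 0 with min_{k∈U_t} π_{k,t} ≥ λ₁ for all t; (H3) there exists C₁ with (1/N_t) Σ_{k∈U_t} y_{k,t}² ≤ C₁ for all t; (H4b) there exists a ≥ 0 such that for all t and all k ≠ l ∈ U_t, π_{kl,t} ≤ (1 + a/n_t) π_{k,t} π_{l,t}. Then E[ (N_t^{-1}(t̂_{yπ,t} − t_{y,t}))² ] = O(n_t^{-1}), i.e. there exist a constant K and t₀ such that for all t ≥ t₀, E[ (N_t^{-1}(t̂_{yπ,t} − t_{y,t}))² ] ≤ K / n_t. -/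

import Mathlib

/-!
Since the Horvitz–Thompson estimator is unbiased, its mean square error is its variance
`∑ₖ ∑ₗ (yₖ/πₖ)(yₗ/πₗ) Δₖₗ` with `Δₖₗ = πₖₗ - πₖπₗ` and `Δₖₖ = πₖ(1 - πₖ)`. The diagonal terms are
`yₖ²(1 - πₖ)/πₖ ≤ yₖ²/λ₁` by (H2), and since `y ≥ 0`, (H4b) bounds each off-diagonal term by
`(a/n) yₖ yₗ`. Hence `N⁻² Var ≤ N⁻² ∑ yₖ²/λ₁ + (a/n) (N⁻¹ ∑ yₖ)²`, and (H3), Cauchy–Schwarz and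
`n ≤ N` bound this by `(C₁/λ₁ + a C₁)/n` for every `t`.
-/

open MeasureTheory ProbabilityTheory Finset Filter

lemma sum_sum_le_of_diag_le_of_offDiag_le {ι : Type*} [Fintype ι] [DecidableEq ι]
    {S : ι → ι → ℝ} {d u : ι → ℝ} {b : ℝ} (hb : 0 ≤ b) (hu : ∀ k, 0 ≤ u k)
    (hdiag : ∀ k, S k k ≤ d k) (hoff : ∀ k l, k ≠ l → S k l ≤ b * (u k * u l)) :
    ∑ k, ∑ l, S k l ≤ ∑ k, d k + b * (∑ k, u k) ^ 2 := by
  have hrow : ∀ k, ∑ l, S k l ≤ d k + ∑ l, b * (u k * u l) := fun k => by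
    rw [← add_sum_erase _ _ (mem_univ k)]
    gcongr ?_ + ?_
    · exact hdiag k
    · calc ∑ l ∈ univ.erase k, S k l ≤ ∑ l ∈ univ.erase k, b * (u k * u l) :=
            sum_le_sum fun l hl => hoff k l (ne_of_mem_erase hl).symm
        _ ≤ ∑ l, b * (u k * u l) :=
            sum_le_sum_of_subset_of_nonneg (erase_subset _ _) fun l _ _ =>
              mul_nonneg hb (mul_nonneg (hu k) (hu l))
  calc ∑ k, ∑ l, S k l ≤ ∑ k, (d k + ∑ l, b * (u k * u l)) := sum_le_sum fun k _ => hrow k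
    _ = ∑ k, d k + b * (∑ k, u k) ^ 2 := by
      rw [sum_add_distrib, sq, sum_mul_sum, mul_sum]
      simp_rw [mul_sum]

lemma memLp_of_forall_eq_zero_or_one {Ω : Type*} [MeasurableSpace Ω] {μ : Measure Ω}
    [IsFiniteMeasure μ] {X : Ω → ℝ} (hX : Measurable X) (h01 : ∀ ω, X ω = 0 ∨ X ω = 1)
    (p : ENNReal) : MemLp X p μ :=
  MemLp.of_bound hX.aestronglyMeasurable 1 <| ae_of_all _ fun ω => by
    rcases h01 ω with h | h <;> simp [h]

section HorvitzThompson

variable {Ω ι : Type*} [MeasurableSpace Ω] {μ : Measure Ω} [IsProbabilityMeasure μ] [Fintype ι]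
  {I : ι → Ω → ℝ} {π y : ι → ℝ}

lemma covariance_self_of_eq_zero_or_one {X : Ω → ℝ} (hX : Measurable X)
    (h01 : ∀ ω, X ω = 0 ∨ X ω = 1) : cov[X, X; μ] = μ[X] * (1 - μ[X]) := by
  have hXX : X * X = X := funext fun ω => by rcases h01 ω with h | h <;> simp [h]
  have hL2 := memLp_of_forall_eq_zero_or_one (μ := μ) hX h01 2
  rw [covariance_eq_sub hL2 hL2, hXX]
  ring

lemma integral_horvitzThompson_sub_sq (hI : ∀ k, MemLp (I k) 2 μ) (hπ : ∀ k, π k = μ[I k])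
    (hπ0 : ∀ k, π k ≠ 0) :
    ∫ ω, (∑ k, y k / π k * I k ω - ∑ k, y k) ^ 2 ∂μ =
      ∑ k, ∑ l, y k / π k * (y l / π l) * cov[I k, I l; μ] := by
  have hterm : ∀ k, MemLp (fun ω => y k / π k * I k ω) 2 μ := fun k => (hI k).const_mul _
  have hmean : μ[fun ω => ∑ k, y k / π k * I k ω] = ∑ k, y k := by
    rw [integral_finsetSum _ fun k _ => (hterm k).integrable one_le_two]
    refine sum_congr rfl fun k _ => ?_
    rw [integral_const_mul, ← hπ k, div_mul_cancel₀ _ (hπ0 k)]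
  calc ∫ ω, (∑ k, y k / π k * I k ω - ∑ k, y k) ^ 2 ∂μ
      = cov[fun ω => ∑ k, y k / π k * I k ω, fun ω => ∑ k, y k / π k * I k ω; μ] := by
        simp only [covariance, hmean, sq]
    _ = ∑ k, ∑ l, y k / π k * (y l / π l) * cov[I k, I l; μ] := by
        rw [covariance_fun_sum_fun_sum hterm hterm]
        simp only [covariance_const_mul_left, covariance_const_mul_right]
        exact sum_congr rfl fun k _ => sum_congr rfl fun l _ => by ring

lemma integral_horvitzThompson_sub_sq_le (hI : ∀ k, Measurable (I k))
    (h01 : ∀ k ω, I k ω = 0 ∨ I k ω = 1) (hπ : ∀ k, π k = μ[I k]) (hy : ∀ k, 0 ≤ y k)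
    {lam b : ℝ} (hlam : 0 < lam) (hπlam : ∀ k, lam ≤ π k) (hb : 0 ≤ b)
    (hπ₂ : ∀ k l, k ≠ l → ∫ ω, I k ω * I l ω ∂μ ≤ (1 + b) * (π k * π l)) :
    ∫ ω, (∑ k, y k / π k * I k ω - ∑ k, y k) ^ 2 ∂μ ≤
      (∑ k, y k ^ 2) / lam + b * (∑ k, y k) ^ 2 := by
  classical
  have hπpos : ∀ k, 0 < π k := fun k => hlam.trans_le (hπlam k)
  have hL2 : ∀ k, MemLp (I k) 2 μ := fun k => memLp_of_forall_eq_zero_or_one (hI k) (h01 k) 2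
  rw [integral_horvitzThompson_sub_sq hL2 hπ fun k => (hπpos k).ne', sum_div]
  refine sum_sum_le_of_diag_le_of_offDiag_le hb hy (fun k => ?_) fun k l hkl => ?_
  · rw [covariance_self_of_eq_zero_or_one (hI k) (h01 k), ← hπ k]
    have hπk := hπpos k
    calc y k / π k * (y k / π k) * (π k * (1 - π k)) = y k ^ 2 / π k - y k ^ 2 := by
          field_simp
      _ ≤ y k ^ 2 / π k := sub_le_self _ (sq_nonneg _)
      _ ≤ y k ^ 2 / lam := div_le_div_of_nonneg_left (sq_nonneg _) hlam (hπlam k)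
  · rw [covariance_eq_sub (hL2 k) (hL2 l), ← hπ k, ← hπ l]
    have hck : 0 ≤ y k / π k * (y l / π l) :=
      mul_nonneg (div_nonneg (hy k) (hπpos k).le) (div_nonneg (hy l) (hπpos l).le)
    calc y k / π k * (y l / π l) * (μ[I k * I l] - π k * π l)
        ≤ y k / π k * (y l / π l) * (b * (π k * π l)) := by
          gcongr
          simp only [Pi.mul_apply]
          linarith [hπ₂ k l hkl]
      _ = b * (y k * y l) := by
          field_simp [(hπpos k).ne', (hπpos l).ne']

end HorvitzThompson

lemma inv_sq_mul_add_le_div {N n lam a S₁ S₂ C : ℝ} (hn : 0 < n) (hnN : n ≤ N)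
    (hlam : 0 < lam) (ha : 0 ≤ a) (hS₂ : S₂ ≤ N * C) (hS₁ : S₁ ^ 2 ≤ N * S₂) :
    N⁻¹ ^ 2 * (S₂ / lam + a / n * S₁ ^ 2) ≤ (C / lam + a * C) / n := by
  have hN : 0 < N := hn.trans_le hnN
  have hS₂0 : 0 ≤ S₂ := nonneg_of_mul_nonneg_right ((sq_nonneg S₁).trans hS₁) hN
  have hC : 0 ≤ C := nonneg_of_mul_nonneg_right (hS₂0.trans hS₂) hN
  calc N⁻¹ ^ 2 * (S₂ / lam + a / n * S₁ ^ 2)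
      ≤ N⁻¹ ^ 2 * (N * C / lam + a / n * (N * (N * C))) := by
        gcongr
        exact hS₁.trans (by gcongr)
    _ = C / lam / N + a * C / n := by
        field_simp
    _ ≤ C / lam / n + a * C / n := by gcongr
    _ = (C / lam + a * C) / n := by ring

theorem ht_mean_square_consistency_prop2_general
    (N : ℕ → ℕ) (hNpos : ∀ t, 1 ≤ N t)
    (Ω : ℕ → Type*) [∀ t, MeasurableSpace (Ω t)]
    (μ : ∀ t, Measure (Ω t)) [∀ t, IsProbabilityMeasure (μ t)]
    (I : ∀ t, Fin (N t) → Ω t → ℝ)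
    (hImeas : ∀ t k, Measurable (I t k))
    (hI01 : ∀ t k ω, I t k ω = 0 ∨ I t k ω = 1)
    (π : ∀ t, Fin (N t) → ℝ)
    (hπ : ∀ t k, π t k = ∫ ω, I t k ω ∂(μ t))
    (hπle : ∀ t k, π t k ≤ 1)
    (π₂ : ∀ t, Fin (N t) → Fin (N t) → ℝ)
    (hπ₂ : ∀ t k l, k ≠ l → π₂ t k l = ∫ ω, I t k ω * I t l ω ∂(μ t))
    (y : ∀ t, Fin (N t) → ℝ) (hy : ∀ t k, 0 ≤ y t k)
    (n : ℕ → ℝ) (hn : ∀ t, n t = ∑ k, π t k)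
    -- (H2)
    (lam₁ : ℝ) (hlam₁ : 0 < lam₁) (H2 : ∀ t k, lam₁ ≤ π t k)
    -- (H3)
    (C₁ : ℝ) (H3 : ∀ t, (1 / (N t : ℝ)) * ∑ k, y t k ^ 2 ≤ C₁)
    -- (H4b)
    (a : ℝ) (ha : 0 ≤ a)
    (H4b : ∀ t, ∀ k l : Fin (N t), k ≠ l →
            π₂ t k l ≤ (1 + a / n t) * (π t k * π t l)) :
    ∃ K : ℝ, ∃ t₀ : ℕ, ∀ t ≥ t₀,
      (∫ ω, ((N t : ℝ)⁻¹ * ((∑ k, (y t k / π t k) * I t k ω) - ∑ k, y t k)) ^ 2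
          ∂(μ t)) ≤ K / n t := by
  refine ⟨C₁ / lam₁ + a * C₁, 0, fun t _ => ?_⟩
  have hN : (0 : ℝ) < N t := by exact_mod_cast hNpos t
  have hn_pos : 0 < n t := by
    have : Nonempty (Fin (N t)) := ⟨⟨0, hNpos t⟩⟩
    rw [hn t]
    exact sum_pos (fun k _ => hlam₁.trans_le (H2 t k)) univ_nonempty
  have hnN : n t ≤ N t := by
    simpa [hn t] using sum_le_sum fun k (_ : k ∈ univ) => hπle t k
  have hS₂ : ∑ k, y t k ^ 2 ≤ N t * C₁ := by
    rw [← inv_mul_le_iff₀ hN, ← one_div]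
    exact H3 t
  have hS₁ : (∑ k, y t k) ^ 2 ≤ N t * ∑ k, y t k ^ 2 := by
    simpa using sq_sum_le_card_mul_sum_sq (s := univ) (f := y t)
  have hmse := integral_horvitzThompson_sub_sq_le (hImeas t) (hI01 t) (hπ t) (hy t) hlam₁ (H2 t)
    (div_nonneg ha hn_pos.le) fun k l hkl => hπ₂ t k l hkl ▸ H4b t k l hkl
  calc _ = (N t : ℝ)⁻¹ ^ 2 * ∫ ω, (∑ k, y t k / π t k * I t k ω - ∑ k, y t k) ^ 2 ∂μ t := by
        simp_rw [mul_pow]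
        exact integral_const_mul _ _
    _ ≤ (N t : ℝ)⁻¹ ^ 2 * ((∑ k, y t k ^ 2) / lam₁ + a / n t * (∑ k, y t k) ^ 2) :=
        mul_le_mul_of_nonneg_left hmse (by positivity)
    _ ≤ (C₁ / lam₁ + a * C₁) / n t := inv_sq_mul_add_le_div hn_pos hnN hlam₁ ha hS₂ hS₁

/-- Proposition 2: under (H1)–(H3) and (H4b), for nonnegative variables `y_t`,
the Narain–Horvitz–Thompson estimator is mean-square consistent, with
`E[(N_t⁻¹(t̂_{yπ,t} − t_{y,t}))²] = O(n_t⁻¹)`. -/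
theorem ht_mean_square_consistency_prop2
    (N : ℕ → ℕ) (hNpos : ∀ t, 1 ≤ N t)
    (hNinf : Tendsto (fun t => (N t : ℝ)) atTop atTop)
    (Ω : ℕ → Type*) [∀ t, MeasurableSpace (Ω t)]
    (μ : ∀ t, Measure (Ω t)) [∀ t, IsProbabilityMeasure (μ t)]
    (I : ∀ t, Fin (N t) → Ω t → ℝ)
    (hImeas : ∀ t k, Measurable (I t k))
    (hI01 : ∀ t k ω, I t k ω = 0 ∨ I t k ω = 1)
    (π : ∀ t, Fin (N t) → ℝ)
    (hπ : ∀ t k, π t k = ∫ ω, I t k ω ∂(μ t))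
    (hπpos : ∀ t k, 0 < π t k) (hπle : ∀ t k, π t k ≤ 1)
    (π₂ : ∀ t, Fin (N t) → Fin (N t) → ℝ)
    (hπ₂ : ∀ t k l, k ≠ l → π₂ t k l = ∫ ω, I t k ω * I t l ω ∂(μ t))
    (y : ∀ t, Fin (N t) → ℝ) (hy : ∀ t k, 0 ≤ y t k)
    (n : ℕ → ℝ) (hn : ∀ t, n t = ∑ k, π t k)
    -- (H1)
    (f : ℝ) (hf : f ∈ Set.Ioo (0 : ℝ) 1)
    (H1 : Tendsto (fun t => n t / N t) atTop (nhds f))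
    -- (H2)
    (lam₁ : ℝ) (hlam₁ : 0 < lam₁) (H2 : ∀ t k, lam₁ ≤ π t k)
    -- (H3)
    (C₁ : ℝ) (H3 : ∀ t, (1 / (N t : ℝ)) * ∑ k, y t k ^ 2 ≤ C₁)
    -- (H4b)
    (a : ℝ) (ha : 0 ≤ a)
    (H4b : ∀ t, ∀ k l : Fin (N t), k ≠ l →
            π₂ t k l ≤ (1 + a / n t) * (π t k * π t l)) :
    ∃ K : ℝ, ∃ t₀ : ℕ, ∀ t ≥ t₀,
      (∫ ω, ((N t : ℝ)⁻¹ * ((∑ k, (y t k / π t k) * I t k ω) - ∑ k, y t k)) ^ 2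
          ∂(μ t)) ≤ K / n t :=
  ht_mean_square_consistency_prop2_general N hNpos Ω μ I hImeas hI01 π hπ hπle π₂ hπ₂ y hy n hn lam₁
    hlam₁ H2 C₁ H3 a ha H4b
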